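/- arXiv:2501.03504 — 2 statements merged into one kernel-verified Lean document; each statement's English description precedes it below -/
import Mathlib

section
/- Let Ω ⊂ ℝⁿ be open, λ > 0, and let u be smooth on Ω with 0 < u ≤ 1, Δu = −λu on Ω, |∇u(x)|² ≤ λ(1 − u(x)²) for all x ∈ Ω, and Hess(log u)(x) negative semidefinite for all x ∈ Ω. Let C > 0, d ≥ √(Cλ/2), and 0 < α ≤ (√(λ² + 8Cλ) − λ)/λ, and set b := α|∇√u|² + C·log u − d on Ω. Then at every point p ∈ Ω with b(p) > 0, one has Δb(p) + 2⟨∇b(p), ∇(log u)(p)⟩ − 2 b(p)² > 0; that is, b satisfies the Euclidean barrier criteria on the set where b > 0. -/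
set_option maxHeartbeats 1000000

open scoped RealInnerProductSpace

/-- The Hessian bilinear form of `f` at `x`, applied to vectors `X`, `Y`. -/
noncomputable def hess {n : ℕ} (f : EuclideanSpace ℝ (Fin n) → ℝ)
    (x X Y : EuclideanSpace ℝ (Fin n)) : ℝ :=
  fderiv ℝ (fderiv ℝ f) x X Y

/-- The Euclidean Laplacian of `f` at `x`: the trace of the Hessian. -/
noncomputable def lap {n : ℕ} (f : EuclideanSpace ℝ (Fin n) → ℝ)
    (x : EuclideanSpace ℝ (Fin n)) : ℝ :=
  ∑ i : Fin n, hess f x (EuclideanSpace.single i 1) (EuclideanSpace.single i 1)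

namespace BarrierAux

variable {n : ℕ}
local notation "E" => EuclideanSpace ℝ (Fin n)

noncomputable def ee (n : ℕ) (i : Fin n) : EuclideanSpace ℝ (Fin n) := EuclideanSpace.single i 1

/-- Partial derivative in the `i`-th coordinate direction. -/
noncomputable def pd (i : Fin n) (f : EuclideanSpace ℝ (Fin n) → ℝ) :
    EuclideanSpace ℝ (Fin n) → ℝ := fun x => fderiv ℝ f x (ee n i)

theorem contDiffAt_pd {k : ℕ} {f : E → ℝ} {p : E} (hf : ContDiffAt ℝ (k + 1 : ℕ) f p)
    (i : Fin n) : ContDiffAt ℝ (k : ℕ) (pd i f) p := by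
  have h1 : ContDiffAt ℝ (k : ℕ) (fderiv ℝ f) p := by
    apply hf.fderiv_right; norm_cast
  exact (ContinuousLinearMap.apply ℝ ℝ (ee n i)).contDiff.comp_contDiffAt _ h1

theorem DA {f : E → ℝ} {x : E} (h : ContDiffAt ℝ (1 : ℕ) f x) : DifferentiableAt ℝ f x :=
  h.differentiableAt (by norm_num)

theorem pd_mul {f g : E → ℝ} {p : E} (hf : DifferentiableAt ℝ f p)
    (hg : DifferentiableAt ℝ g p) (i : Fin n) :
    pd i (fun y => f y * g y) p = pd i f p * g p + f p * pd i g p := by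
  unfold pd; rw [fderiv_fun_mul hf hg]; simp; ring

theorem pd_sum {ι : Type*} {s : Finset ι} {f : ι → E → ℝ} {p : E}
    (hf : ∀ j ∈ s, DifferentiableAt ℝ (f j) p) (i : Fin n) :
    pd i (fun y => ∑ j ∈ s, f j y) p = ∑ j ∈ s, pd i (f j) p := by
  unfold pd; rw [fderiv_fun_sum hf]; simp

theorem pd_const_mul {f : E → ℝ} {p : E} (hf : DifferentiableAt ℝ f p) (c : ℝ) (i : Fin n) :
    pd i (fun y => c * f y) p = c * pd i f p := by
  unfold pd; rw [fderiv_const_mul hf]; simp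

theorem pd_add {f g : E → ℝ} {p : E} (hf : DifferentiableAt ℝ f p)
    (hg : DifferentiableAt ℝ g p) (i : Fin n) :
    pd i (fun y => f y + g y) p = pd i f p + pd i g p := by
  unfold pd; rw [fderiv_fun_add hf hg]; simp

theorem pd_sub_const {f : E → ℝ} {p : E} (hf : DifferentiableAt ℝ f p) (c : ℝ) (i : Fin n) :
    pd i (fun y => f y - c) p = pd i f p := by
  unfold pd; rw [fderiv_sub_const]

theorem pd_const_sub {f : E → ℝ} {p : E} (hf : DifferentiableAt ℝ f p) (c : ℝ) (i : Fin n) :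
    pd i (fun y => c - f y) p = -pd i f p := by
  unfold pd; rw [fderiv_fun_sub (differentiableAt_const c) hf]; simp

theorem pd_div_const {f : E → ℝ} {p : E} (hf : DifferentiableAt ℝ f p) (c : ℝ) (i : Fin n) :
    pd i (fun y => f y / c) p = pd i f p / c := by
  rw [show (fun y => f y / c) = fun y => c⁻¹ * f y from funext fun y => by
    rw [div_eq_inv_mul], pd_const_mul hf, inv_mul_eq_div]

theorem pd_inv {f : E → ℝ} {p : E} (hf : DifferentiableAt ℝ f p) (hne : f p ≠ 0) (i : Fin n) :
    pd i (fun y => (f y)⁻¹) p = -pd i f p / f p ^ 2 := by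
  have h : HasFDerivAt (fun y => (f y)⁻¹) (-(f p ^ 2)⁻¹ • fderiv ℝ f p) p :=
    (hasDerivAt_inv hne).comp_hasFDerivAt p hf.hasFDerivAt
  unfold pd; rw [h.fderiv]; simp; ring

theorem pd_log {f : E → ℝ} {p : E} (hf : DifferentiableAt ℝ f p) (hpos : 0 < f p) (i : Fin n) :
    pd i (fun y => Real.log (f y)) p = pd i f p / f p := by
  have h : HasFDerivAt (fun y => Real.log (f y)) ((f p)⁻¹ • fderiv ℝ f p) p :=
    (Real.hasDerivAt_log hpos.ne').comp_hasFDerivAt p hf.hasFDerivAt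
  unfold pd; rw [h.fderiv]; simp; ring

theorem pd_sqrt {f : E → ℝ} {p : E} (hf : DifferentiableAt ℝ f p) (hpos : 0 < f p) (i : Fin n) :
    pd i (fun y => Real.sqrt (f y)) p = pd i f p / (2 * Real.sqrt (f p)) := by
  have h : HasFDerivAt (fun y => Real.sqrt (f y))
      ((1 / (2 * Real.sqrt (f p))) • fderiv ℝ f p) p :=
    (Real.hasDerivAt_sqrt hpos.ne').comp_hasFDerivAt p hf.hasFDerivAt
  unfold pd; rw [h.fderiv]; simp; ring

theorem pd_congr_on {Ω : Set E} (hΩ : IsOpen Ω) {f g : E → ℝ} (h : ∀ x ∈ Ω, f x = g x)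
    {p : E} (hp : p ∈ Ω) (i : Fin n) : pd i f p = pd i g p := by
  unfold pd
  rw [Filter.EventuallyEq.fderiv_eq (by filter_upwards [hΩ.mem_nhds hp] with x hx using h x hx)]

theorem pd_pd_eq_hess {f : E → ℝ} {p : E} (hf : ContDiffAt ℝ 2 f p) (i j : Fin n) :
    pd i (pd j f) p = hess f p (ee n i) (ee n j) := by
  have hd : DifferentiableAt ℝ (fderiv ℝ f) p :=
    (hf.fderiv_right (m := 1) (by norm_num)).differentiableAt (by norm_num)
  unfold pd
  have h : fderiv ℝ (fun y => (fderiv ℝ f y) ((fun _ : E => ee n j) y)) p =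
      ((fderiv ℝ f p).comp (fderiv ℝ (fun _ : E => ee n j) p)) +
        (fderiv ℝ (fderiv ℝ f) p).flip (ee n j) :=
    fderiv_clm_apply hd (differentiableAt_const _)
  simp only [fderiv_const] at h
  rw [show (fun y => fderiv ℝ f y (ee n j)) = (fun y => (fderiv ℝ f y) ((fun _ : E => ee n j) y))
    from rfl, h]
  simp [hess]

theorem pd_comm {f : E → ℝ} {p : E} (hf : ContDiffAt ℝ 2 f p) (i j : Fin n) :
    pd i (pd j f) p = pd j (pd i f) p := by
  rw [pd_pd_eq_hess hf, pd_pd_eq_hess hf]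
  exact hf.isSymmSndFDerivAt (by norm_num) _ _

theorem lap_eq_sum_pd {f : E → ℝ} {p : E} (hf : ContDiffAt ℝ 2 f p) :
    lap f p = ∑ i, pd i (pd i f) p := by
  unfold lap
  exact Finset.sum_congr rfl fun i _ => (pd_pd_eq_hess hf i i).symm

theorem grad_coord (f : E → ℝ) (x : E) (i : Fin n) : gradient f x i = pd i f x := by
  have h : ⟪(InnerProductSpace.toDual ℝ E).symm (fderiv ℝ f x), ee n i⟫ = fderiv ℝ f x (ee n i) :=
    InnerProductSpace.toDual_symm_apply
  rw [gradient, pd.eq_def]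
  rw [← h]
  simp only [PiLp.inner_apply, RCLike.inner_apply, ee, EuclideanSpace.single_apply,
    starRingEnd_apply, star_trivial, mul_ite, mul_one, mul_zero, ite_mul, one_mul, zero_mul]
  rw [Finset.sum_ite_eq' Finset.univ i]
  simp

theorem inner_grad (f g : E → ℝ) (x : E) :
    ⟪gradient f x, gradient g x⟫ = ∑ i, pd i f x * pd i g x := by
  simp_rw [PiLp.inner_apply, RCLike.inner_apply, grad_coord]; simp
  exact Finset.sum_congr rfl fun i _ => mul_comm _ _

theorem norm_grad (f : E → ℝ) (x : E) :
    ‖gradient f x‖ ^ 2 = ∑ i, pd i f x ^ 2 := by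
  rw [← real_inner_self_eq_norm_sq, inner_grad]; ring_nf

theorem arith1 (S R q : ℝ) (hS : 0 ≤ S) (hR : R ^ 2 ≤ S * q ^ 2) :
    S + 2 * R + q ^ 2 ≥ 0 := by
  nlinarith [sq_nonneg (S - q^2), sq_nonneg (S + q^2), sq_nonneg (S + 2*R + q^2)]

theorem arith2 (lam C d α u0 q0 v0 b0 : ℝ)
    (hlam : 0 < lam) (hC : 0 < C) (hd2 : C * lam ≤ 2 * d ^ 2) (hdpos : 0 < d)
    (h8 : α * lam * (α + 2) ≤ 8 * C) (hα : 0 < α)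
    (hu0 : 0 < u0) (hu1 : u0 ≤ 1) (hq0 : 0 ≤ q0) (hv0 : v0 ≤ 0)
    (hling : u0 ^ 2 * q0 ≤ lam * (1 - u0 ^ 2))
    (hb0 : b0 = α * u0 * q0 / 4 + C * v0 - d) (hbpos : 0 < b0) :
    α * (-(lam * u0 * q0 / 4)) + C * (-lam - q0) + 2 * C * q0 - 2 * b0 ^ 2 > 0 := by
  have h1 : b0 ≤ α * u0 * q0 / 4 - d := by nlinarith [mul_nonpos_of_nonneg_of_nonpos hC.le hv0]
  have hd4 : 0 < α * u0 * q0 / 4 - d := lt_of_lt_of_le hbpos h1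
  have h2 : u0 * (α * u0 * q0 / 4) ≤ α * lam / 4 := by
    nlinarith [mul_le_mul_of_nonneg_left hling hα.le,
      mul_nonneg (mul_nonneg hα.le hlam.le) (sq_nonneg u0)]
  have h1' : u0 * b0 ≤ α * lam / 4 - d * u0 := by nlinarith [mul_le_mul_of_nonneg_left h1 hu0.le]
  have h3x : 2 * u0 * b0 ^ 2 ≤ α ^ 2 * lam * u0 * q0 / 8 - α * d * u0 ^ 2 * q0 / 2
      - d * α * lam / 2 + 2 * d ^ 2 * u0 := by
    nlinarith [mul_le_mul h1 h1' (by positivity) hd4.le]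
  have hA : 2 * d ^ 2 * u0 < α * d * u0 ^ 2 * q0 / 2 := by
    nlinarith [mul_pos (mul_pos (mul_pos two_pos hdpos) hu0) hd4]
  have hB : 2 * d ^ 2 * u0 < d * α * lam / 2 := by
    have hx : u0 * d < α * lam / 4 := lt_of_lt_of_le (by nlinarith) h2
    nlinarith [mul_lt_mul_of_pos_left hx (mul_pos two_pos hdpos)]
  have hT1 : 0 ≤ u0 * q0 * (8 * C - 2 * α * lam * u0 - α ^ 2 * lam) := by
    apply mul_nonneg (mul_nonneg hu0.le hq0)
    nlinarith [mul_nonneg (mul_nonneg hα.le hlam.le) (sub_nonneg.2 hu1)]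
  have hCl : C * lam * u0 ≤ 2 * d ^ 2 * u0 := mul_le_mul_of_nonneg_right hd2 hu0.le
  have key : 0 < u0 * (α * (-(lam * u0 * q0 / 4)) + C * (-lam - q0)
      + 2 * C * q0 - 2 * b0 ^ 2) := by
    nlinarith [h3x, hA, hB, hT1, hCl]
  by_contra hcon
  push_neg at hcon
  nlinarith [mul_nonpos_of_nonneg_of_nonpos hu0.le hcon]

end BarrierAux

open BarrierAux

/-- Lemma 3.1 of the paper (Euclidean case): the barrier `b = α|∇√u|² + C·log u − d`
satisfies the Euclidean barrier criteria `Δb + 2⟨∇b,∇v⟩ − 2b² > 0` on `{b > 0}`. -/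
theorem barrier_satisfies_barrier_criteria {n : ℕ} (hn : 0 < n)
    (Ω : Set (EuclideanSpace ℝ (Fin n))) (hΩo : IsOpen Ω)
    (lam : ℝ) (hlam : 0 < lam)
    (u : EuclideanSpace ℝ (Fin n) → ℝ) (hu : ContDiffOn ℝ (⊤ : ℕ∞) u Ω)
    (hupos : ∀ x ∈ Ω, 0 < u x) (hule : ∀ x ∈ Ω, u x ≤ 1)
    (heig : ∀ x ∈ Ω, lap u x = -lam * u x)
    -- Ling's gradient estimate
    (hling : ∀ x ∈ Ω, ‖gradient u x‖ ^ 2 ≤ lam * (1 - u x ^ 2))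
    -- log-concavity: `Hess (log u)` is negative semidefinite on `Ω`
    (hlc : ∀ x ∈ Ω, ∀ X : EuclideanSpace ℝ (Fin n),
      hess (fun y => Real.log (u y)) x X X ≤ 0)
    (C d α : ℝ) (hC : 0 < C) (hd : Real.sqrt (C * lam / 2) ≤ d)
    (hα0 : 0 < α) (hα : α ≤ (Real.sqrt (lam ^ 2 + 8 * C * lam) - lam) / lam)
    (b : EuclideanSpace ℝ (Fin n) → ℝ)
    (hb : b = fun x =>
      α * ‖gradient (fun y => Real.sqrt (u y)) x‖ ^ 2 + C * Real.log (u x) - d) :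
    ∀ p ∈ Ω, 0 < b p →
      lap b p + 2 * ⟪gradient b p, gradient (fun y => Real.log (u y)) p⟫
        - 2 * b p ^ 2 > 0 := by
  intro p hp hbp
  set v : EuclideanSpace ℝ (Fin n) → ℝ := fun y => Real.log (u y) with hvdef
  set w : EuclideanSpace ℝ (Fin n) → ℝ := fun y => Real.sqrt (u y) with hwdef
  -- basic smoothness
  have hcu : ∀ x ∈ Ω, ∀ k : ℕ, ContDiffAt ℝ (k : ℕ) u x := fun x hx k =>
    ((hu x hx).contDiffAt (hΩo.mem_nhds hx)).of_le (by exact_mod_cast le_top)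
  have hune : ∀ x ∈ Ω, u x ≠ 0 := fun x hx => (hupos x hx).ne'
  have hcv : ∀ x ∈ Ω, ∀ k : ℕ, ContDiffAt ℝ (k : ℕ) v x := fun x hx k =>
    (Real.contDiffAt_log.2 (hune x hx)).comp x (hcu x hx k)
  have hcw : ∀ x ∈ Ω, ∀ k : ℕ, ContDiffAt ℝ (k : ℕ) w x := fun x hx k =>
    (Real.contDiffAt_sqrt (hune x hx)).comp x (hcu x hx k)
  have hdu : ∀ x ∈ Ω, DifferentiableAt ℝ u x := fun x hx => DA (hcu x hx 1)
  -- partial derivatives smoothness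
  have hpdu_cd : ∀ x ∈ Ω, ∀ k : ℕ, ∀ i, ContDiffAt ℝ (k : ℕ) (pd i u) x := fun x hx k i =>
    contDiffAt_pd (hcu x hx (k + 1)) i
  have hpdv_cd : ∀ x ∈ Ω, ∀ k : ℕ, ∀ i, ContDiffAt ℝ (k : ℕ) (pd i v) x := fun x hx k i =>
    contDiffAt_pd (hcv x hx (k + 1)) i
  have hpdw_cd : ∀ x ∈ Ω, ∀ k : ℕ, ∀ i, ContDiffAt ℝ (k : ℕ) (pd i w) x := fun x hx k i =>
    contDiffAt_pd (hcw x hx (k + 1)) i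
  have hpd2v_cd : ∀ x ∈ Ω, ∀ k : ℕ, ∀ i j, ContDiffAt ℝ (k : ℕ) (pd j (pd i v)) x :=
    fun x hx k i j => contDiffAt_pd (hpdv_cd x hx (k + 1) i) j
  -- first derivative formulas
  have hpdv_eq : ∀ x ∈ Ω, ∀ i, pd i v x = pd i u x / u x := fun x hx i =>
    pd_log (hdu x hx) (hupos x hx) i
  have hpdw_eq : ∀ x ∈ Ω, ∀ i, pd i w x = pd i u x / (2 * Real.sqrt (u x)) := fun x hx i =>
    pd_sqrt (hdu x hx) (hupos x hx) i
  have hpdu_eq : ∀ x ∈ Ω, ∀ i, pd i u x = u x * pd i v x := by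
    intro x hx i; rw [hpdv_eq x hx i]; field_simp [hune x hx]
  -- q and Φ
  set q : EuclideanSpace ℝ (Fin n) → ℝ := fun x => ∑ i, pd i v x ^ 2 with hqdef
  set Φ : EuclideanSpace ℝ (Fin n) → ℝ := fun x => ∑ i, pd i w x ^ 2 with hΦdef
  have hq_cd : ∀ x ∈ Ω, ∀ k : ℕ, ContDiffAt ℝ (k : ℕ) q x := fun x hx k =>
    ContDiffAt.sum fun i _ => (hpdv_cd x hx k i).pow 2
  have hΦ_cd : ∀ x ∈ Ω, ∀ k : ℕ, ContDiffAt ℝ (k : ℕ) Φ x := fun x hx k =>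
    ContDiffAt.sum fun i _ => (hpdw_cd x hx k i).pow 2
  have hpdq_cd : ∀ x ∈ Ω, ∀ k : ℕ, ∀ i, ContDiffAt ℝ (k : ℕ) (pd i q) x := fun x hx k i =>
    contDiffAt_pd (hq_cd x hx (k + 1)) i
  have hq_nonneg : ∀ x, 0 ≤ q x := fun x => Finset.sum_nonneg fun i _ => sq_nonneg _
  have hquu : ∀ x ∈ Ω, u x ^ 2 * q x = ∑ i, pd i u x ^ 2 := by
    intro x hx
    rw [hqdef]
    simp only [Finset.mul_sum]
    refine Finset.sum_congr rfl fun i _ => ?_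
    rw [hpdv_eq x hx i]
    field_simp [hune x hx]
  have hΦuq : ∀ x ∈ Ω, Φ x = u x * q x / 4 := by
    intro x hx
    have h1 : Φ x = (∑ i, pd i u x ^ 2) / (4 * u x) := by
      rw [hΦdef]
      simp only [Finset.sum_div]
      refine Finset.sum_congr rfl fun i _ => ?_
      rw [hpdw_eq x hx i, div_pow, mul_pow, Real.sq_sqrt (hupos x hx).le]
      norm_num
    rw [h1, ← hquu x hx]
    field_simp [hune x hx]
    try ring
  -- Laplacian of u
  have hlap_u : ∀ x ∈ Ω, ∑ i, pd i (pd i u) x = -lam * u x := by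
    intro x hx
    rw [← lap_eq_sum_pd (hcu x hx 2), heig x hx]
  -- Laplacian of v
  have hΔv : ∀ x ∈ Ω, ∑ i, pd i (pd i v) x = -lam - q x := by
    intro x hx
    have hterm : ∀ i, pd i (pd i v) x
        = pd i (pd i u) x * (u x)⁻¹ + pd i u x * (-pd i u x / u x ^ 2) := by
      intro i
      have hcongr : pd i (pd i v) x = pd i (fun y => pd i u y * (u y)⁻¹) x :=
        pd_congr_on hΩo (fun y hy => by rw [hpdv_eq y hy i, div_eq_mul_inv]) hx i
      rw [hcongr, pd_mul (g := fun y => (u y)⁻¹) (DA (hpdu_cd x hx 1 i)) ((hdu x hx).inv (hune x hx)) i,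
        pd_inv (hdu x hx) (hune x hx) i]
    have e2 : ∑ i, pd i u x * (-pd i u x / u x ^ 2)
        = -((∑ i, pd i u x ^ 2) / u x ^ 2) := by
      have h : ∀ i : Fin n, pd i u x * (-pd i u x / u x ^ 2)
          = -(pd i u x ^ 2 / u x ^ 2) := fun i => by ring
      simp only [h]
      rw [Finset.sum_neg_distrib, ← Finset.sum_div]
    have e1 : ∑ i, pd i (pd i v) x
        = (∑ i, pd i (pd i u) x) * (u x)⁻¹ - (∑ i, pd i u x ^ 2) / u x ^ 2 := by
      simp only [hterm]
      rw [Finset.sum_add_distrib, ← Finset.sum_mul, e2, ← sub_eq_add_neg]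
    rw [e1, hlap_u x hx, ← hquu x hx]
    field_simp [hune x hx]
    try ring_nf
  -- symmetry of second derivatives of v on Ω
  have hsymm : ∀ x ∈ Ω, ∀ i j, pd j (pd i v) x = pd i (pd j v) x := fun x hx i j =>
    pd_comm (hcv x hx 2) j i
  -- first derivative of q
  have hpdq : ∀ x ∈ Ω, ∀ j, pd j q x = ∑ i, 2 * (pd i v x * pd j (pd i v) x) := by
    intro x hx j
    have hqm : q = fun y => ∑ i, pd i v y * pd i v y := by
      rw [hqdef]; funext y; exact Finset.sum_congr rfl fun i _ => by ring
    rw [hqm, pd_sum (f := fun i y => pd i v y * pd i v y) (fun i _ => (DA (hpdv_cd x hx 1 i)).mul (DA (hpdv_cd x hx 1 i))) j]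
    refine Finset.sum_congr rfl fun i _ => ?_
    rw [pd_mul (DA (hpdv_cd x hx 1 i)) (DA (hpdv_cd x hx 1 i)) j]
    ring
  -- Bochner formula for q
  have hΔq : ∀ x ∈ Ω, ∑ j, pd j (pd j q) x
      = 2 * (∑ i, ∑ j, pd j (pd i v) x ^ 2) - 2 * ∑ i, pd i v x * pd i q x := by
    intro x hx
    have step1 : ∀ j, pd j (pd j q) x = ∑ i, (2 * (pd j (pd i v) x * pd j (pd i v) x
        + pd i v x * pd j (pd j (pd i v)) x)) := by
      intro j
      have e1 : pd j (pd j q) x = pd j (fun y => ∑ i, 2 * (pd i v y * pd j (pd i v) y)) x :=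
        pd_congr_on hΩo (fun y hy => hpdq y hy j) hx j
      rw [e1, pd_sum (f := fun i y => 2 * (pd i v y * pd j (pd i v) y)) (fun i _ => ((DA (hpdv_cd x hx 1 i)).mul
        (DA (hpd2v_cd x hx 1 i j))).const_mul 2) j]
      refine Finset.sum_congr rfl fun i _ => ?_
      rw [pd_const_mul (f := fun y => pd i v y * pd j (pd i v) y) ((DA (hpdv_cd x hx 1 i)).mul (DA (hpd2v_cd x hx 1 i j))) 2 j,
        pd_mul (DA (hpdv_cd x hx 1 i)) (DA (hpd2v_cd x hx 1 i j)) j]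
      try ring
    have step2 : ∀ i, ∑ j, pd j (pd j (pd i v)) x = -pd i q x := by
      intro i
      have eswap : ∀ j, pd j (pd j (pd i v)) x = pd i (pd j (pd j v)) x := by
        intro j
        have a1 : pd j (pd j (pd i v)) x = pd j (pd i (pd j v)) x :=
          pd_congr_on hΩo (fun y hy => by rw [hsymm y hy i j]) hx j
        have a2 : pd j (pd i (pd j v)) x = pd i (pd j (pd j v)) x :=
          pd_comm (hpdv_cd x hx 2 j) j i
        rw [a1, a2]
      calc ∑ j, pd j (pd j (pd i v)) x = ∑ j, pd i (pd j (pd j v)) x :=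
            Finset.sum_congr rfl fun j _ => eswap j
        _ = pd i (fun y => ∑ j, pd j (pd j v) y) x :=
            (pd_sum (fun j _ => DA (hpd2v_cd x hx 1 j j)) i).symm
        _ = pd i (fun y => -lam - q y) x :=
            pd_congr_on hΩo (fun y hy => hΔv y hy) hx i
        _ = -pd i q x := pd_const_sub (DA (hq_cd x hx 1)) (-lam) i
    have inner_eq : ∀ i, ∑ j, (2 * (pd j (pd i v) x * pd j (pd i v) x
        + pd i v x * pd j (pd j (pd i v)) x))
        = 2 * (∑ j, pd j (pd i v) x ^ 2) - 2 * (pd i v x * pd i q x) := by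
      intro i
      have h2 : ∀ j, 2 * (pd j (pd i v) x * pd j (pd i v) x
          + pd i v x * pd j (pd j (pd i v)) x)
          = 2 * pd j (pd i v) x ^ 2 + 2 * (pd i v x * pd j (pd j (pd i v)) x) := fun j => by ring
      simp only [h2]
      rw [Finset.sum_add_distrib]
      simp only [← Finset.mul_sum]
      rw [step2 i]
      ring
    calc ∑ j, pd j (pd j q) x
        = ∑ j, ∑ i, (2 * (pd j (pd i v) x * pd j (pd i v) x
            + pd i v x * pd j (pd j (pd i v)) x)) := Finset.sum_congr rfl fun j _ => step1 j
      _ = ∑ i, ∑ j, (2 * (pd j (pd i v) x * pd j (pd i v) x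
            + pd i v x * pd j (pd j (pd i v)) x)) := Finset.sum_comm
      _ = ∑ i, (2 * (∑ j, pd j (pd i v) x ^ 2) - 2 * (pd i v x * pd i q x)) :=
            Finset.sum_congr rfl fun i _ => inner_eq i
      _ = 2 * (∑ i, ∑ j, pd j (pd i v) x ^ 2) - 2 * ∑ i, pd i v x * pd i q x := by
            rw [Finset.sum_sub_distrib, ← Finset.mul_sum, ← Finset.mul_sum]
  -- first derivative of Φ
  have hpdF : ∀ x ∈ Ω, ∀ j, pd j Φ x = (pd j u x * q x + u x * pd j q x) / 4 := by
    intro x hx j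
    have e1 : pd j Φ x = pd j (fun y => u y * q y / 4) x :=
      pd_congr_on hΩo (fun y hy => hΦuq y hy) hx j
    have e2 : pd j (fun y => u y * q y / 4) x = pd j (fun y => u y * q y) x / 4 :=
      pd_div_const ((hdu x hx).mul (DA (hq_cd x hx 1))) 4 j
    rw [e1, e2, pd_mul (hdu x hx) (DA (hq_cd x hx 1)) j]
  -- Laplacian of Φ at p
  have hΔF : ∑ j, pd j (pd j Φ) p = -lam * Φ p
      + u p * (∑ i, ∑ j, pd j (pd i v) p ^ 2) / 2 := by
    have hterm : ∀ j, pd j (pd j Φ) p = (pd j (pd j u) p * q p + pd j u p * pd j q p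
        + (pd j u p * pd j q p + u p * pd j (pd j q) p)) / 4 := by
      intro j
      have e1 : pd j (pd j Φ) p = pd j (fun y => (pd j u y * q y + u y * pd j q y) / 4) p :=
        pd_congr_on hΩo (fun y hy => hpdF y hy j) hp j
      have hd1 : DifferentiableAt ℝ (fun y => pd j u y * q y) p :=
        (DA (hpdu_cd p hp 1 j)).mul (DA (hq_cd p hp 1))
      have hd2 : DifferentiableAt ℝ (fun y => u y * pd j q y) p :=
        (hdu p hp).mul (DA (hpdq_cd p hp 1 j))
      have e2 : pd j (fun y => (pd j u y * q y + u y * pd j q y) / 4) p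
          = pd j (fun y => pd j u y * q y + u y * pd j q y) p / 4 :=
        pd_div_const (hd1.add hd2) 4 j
      have e3 : pd j (fun y => pd j u y * q y + u y * pd j q y) p
          = pd j (fun y => pd j u y * q y) p + pd j (fun y => u y * pd j q y) p :=
        pd_add hd1 hd2 j
      rw [e1, e2, e3, pd_mul (DA (hpdu_cd p hp 1 j)) (DA (hq_cd p hp 1)) j,
        pd_mul (hdu p hp) (DA (hpdq_cd p hp 1 j)) j]
    have hWu : ∑ j, pd j u p * pd j q p = u p * ∑ j, pd j v p * pd j q p := by
      rw [Finset.mul_sum]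
      exact Finset.sum_congr rfl fun j _ => by rw [hpdu_eq p hp j]; ring
    calc ∑ j, pd j (pd j Φ) p
        = ((∑ j, pd j (pd j u) p) * q p + 2 * (∑ j, pd j u p * pd j q p)
            + u p * ∑ j, pd j (pd j q) p) / 4 := by
          simp only [hterm]
          rw [← Finset.sum_div]
          congr 1
          simp only [Finset.sum_add_distrib, ← Finset.sum_mul, ← Finset.mul_sum]
          ring
      _ = -lam * Φ p + u p * (∑ i, ∑ j, pd j (pd i v) p ^ 2) / 2 := by
          rw [hlap_u p hp, hΔq p hp, hWu, hΦuq p hp]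
          ring
  -- rewrite b
  have hbfun : b = fun x => α * Φ x + C * v x - d := by
    rw [hb]; funext x; rw [norm_grad w x]
  rw [hbfun] at hbp ⊢
  have hbb_cd : ∀ x ∈ Ω, ∀ k : ℕ, ContDiffAt ℝ (k : ℕ) (fun y => α * Φ y + C * v y - d) x :=
    fun x hx k => ((contDiffAt_const.mul (hΦ_cd x hx k)).add
      (contDiffAt_const.mul (hcv x hx k))).sub contDiffAt_const
  have hpdb : ∀ x ∈ Ω, ∀ i, pd i (fun y => α * Φ y + C * v y - d) x
      = α * pd i Φ x + C * pd i v x := by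
    intro x hx i
    have hd1 : DifferentiableAt ℝ (fun y => α * Φ y) x := (DA (hΦ_cd x hx 1)).const_mul α
    have hd2 : DifferentiableAt ℝ (fun y => C * v y) x := (DA (hcv x hx 1)).const_mul C
    have e1 : pd i (fun y => α * Φ y + C * v y - d) x
        = pd i (fun y => α * Φ y + C * v y) x := pd_sub_const (hd1.add hd2) d i
    have e2 : pd i (fun y => α * Φ y + C * v y) x
        = pd i (fun y => α * Φ y) x + pd i (fun y => C * v y) x := pd_add hd1 hd2 i
    rw [e1, e2, pd_const_mul (DA (hΦ_cd x hx 1)) α i, pd_const_mul (DA (hcv x hx 1)) C i]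
  have hpdb2 : ∀ i, pd i (pd i (fun y => α * Φ y + C * v y - d)) p
      = α * pd i (pd i Φ) p + C * pd i (pd i v) p := by
    intro i
    have hd1 : DifferentiableAt ℝ (pd i Φ) p := DA (contDiffAt_pd (hΦ_cd p hp 2) i)
    have hd2 : DifferentiableAt ℝ (pd i v) p := DA (hpdv_cd p hp 1 i)
    have e1 : pd i (pd i (fun y => α * Φ y + C * v y - d)) p
        = pd i (fun y => α * pd i Φ y + C * pd i v y) p :=
      pd_congr_on hΩo (fun y hy => hpdb y hy i) hp i
    have e2 : pd i (fun y => α * pd i Φ y + C * pd i v y) p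
        = pd i (fun y => α * pd i Φ y) p + pd i (fun y => C * pd i v y) p :=
      pd_add (hd1.const_mul α) (hd2.const_mul C) i
    rw [e1, e2, pd_const_mul hd1 α i, pd_const_mul hd2 C i]
  have hlapb : lap (fun y => α * Φ y + C * v y - d) p
      = α * (∑ i, pd i (pd i Φ) p) + C * (∑ i, pd i (pd i v) p) := by
    rw [lap_eq_sum_pd (hbb_cd p hp 2), Finset.mul_sum, Finset.mul_sum,
      ← Finset.sum_add_distrib]
    exact Finset.sum_congr rfl fun i _ => hpdb2 i
  -- inner product term
  have hinner : ⟪gradient (fun y => α * Φ y + C * v y - d) p, gradient v p⟫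
      = α * ((u p * q p ^ 2 + u p * ∑ i, pd i v p * pd i q p) / 4) + C * q p := by
    rw [inner_grad]
    have e1 : ∀ i, pd i (fun y => α * Φ y + C * v y - d) p * pd i v p
        = α * (pd i Φ p * pd i v p) + C * pd i v p ^ 2 := by
      intro i; rw [hpdb p hp i]; ring
    simp only [e1]
    rw [Finset.sum_add_distrib, ← Finset.mul_sum, ← Finset.mul_sum]
    have s1 : ∑ i, u p * q p * pd i v p ^ 2 = u p * q p ^ 2 := by
      rw [← Finset.mul_sum, show (∑ i, pd i v p ^ 2) = q p from rfl]
      ring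
    have s2 : ∑ i, u p * (pd i v p * pd i q p) = u p * ∑ i, pd i v p * pd i q p :=
      (Finset.mul_sum _ _ _).symm
    have hmid : ∑ i, pd i Φ p * pd i v p
        = (u p * q p ^ 2 + u p * ∑ i, pd i v p * pd i q p) / 4 := by
      calc ∑ i, pd i Φ p * pd i v p
          = ∑ i, (u p * q p * pd i v p ^ 2 / 4 + u p * (pd i v p * pd i q p) / 4) :=
            Finset.sum_congr rfl fun i _ => by rw [hpdF p hp i, hpdu_eq p hp i]; ring
        _ = (∑ i, u p * q p * pd i v p ^ 2) / 4
            + (∑ i, u p * (pd i v p * pd i q p)) / 4 := by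
            rw [Finset.sum_add_distrib, Finset.sum_div, Finset.sum_div]
        _ = (u p * q p ^ 2 + u p * ∑ i, pd i v p * pd i q p) / 4 := by rw [s1, s2]; ring
    rw [hmid, show (∑ i, pd i v p ^ 2) = q p from rfl]
  -- Cauchy-Schwarz
  have hW2 : ∑ i, pd i v p * pd i q p
      = 2 * ∑ i, ∑ j, pd i v p * pd j v p * pd i (pd j v) p := by
    have e1 : ∀ i, pd i v p * pd i q p
        = 2 * ∑ j, pd i v p * pd j v p * pd i (pd j v) p := by
      intro i
      rw [hpdq p hp i, Finset.mul_sum, Finset.mul_sum]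
      refine Finset.sum_congr rfl fun j _ => ?_
      ring
    simp only [e1]
    rw [← Finset.mul_sum]
  have hCS : (∑ i, ∑ j, pd i v p * pd j v p * pd i (pd j v) p) ^ 2
      ≤ (∑ i, ∑ j, pd j (pd i v) p ^ 2) * q p ^ 2 := by
    have hcs := Finset.sum_mul_sq_le_sq_mul_sq (Finset.univ ×ˢ Finset.univ)
      (fun ik : Fin n × Fin n => pd ik.1 (pd ik.2 v) p)
      (fun ik : Fin n × Fin n => pd ik.1 v p * pd ik.2 v p)
    rw [Finset.sum_product, Finset.sum_product, Finset.sum_product] at hcs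
    have el : (∑ i, ∑ j, pd i v p * pd j v p * pd i (pd j v) p)
        = ∑ i, ∑ j, pd i (pd j v) p * (pd i v p * pd j v p) := by
      refine Finset.sum_congr rfl fun i _ => Finset.sum_congr rfl fun j _ => by ring
    have eS : (∑ i : Fin n, ∑ j : Fin n, pd i (pd j v) p ^ 2)
        = ∑ i, ∑ j, pd j (pd i v) p ^ 2 := Finset.sum_comm
    have eq2 : (∑ i : Fin n, ∑ j : Fin n, (pd i v p * pd j v p) ^ 2) = q p ^ 2 := by
      have : ∀ i : Fin n, ∑ j : Fin n, (pd i v p * pd j v p) ^ 2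
          = pd i v p ^ 2 * ∑ j, pd j v p ^ 2 := by
        intro i
        rw [Finset.mul_sum]
        exact Finset.sum_congr rfl fun j _ => by ring
      simp only [this]
      rw [← Finset.sum_mul]
      have hq' : (∑ i, pd i v p ^ 2) = q p := rfl
      rw [hq']
      ring
    rw [el, ← eS, ← eq2]
    exact hcs
  -- numerical facts
  have hlingp : u p ^ 2 * q p ≤ lam * (1 - u p ^ 2) := by
    have h := hling p hp
    rw [norm_grad u p] at h
    rw [hquu p hp]
    exact h
  have hdpos : 0 < d := lt_of_lt_of_le (Real.sqrt_pos.2 (by positivity)) hd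
  have hd2 : C * lam ≤ 2 * d ^ 2 := by
    have h1 := Real.sq_sqrt (show (0:ℝ) ≤ C * lam / 2 by positivity)
    nlinarith [pow_le_pow_left₀ (Real.sqrt_nonneg (C * lam / 2)) hd 2]
  have h8 : α * lam * (α + 2) ≤ 8 * C := by
    have hX : (0:ℝ) ≤ lam ^ 2 + 8 * C * lam := by positivity
    have h1 : α * lam ≤ Real.sqrt (lam ^ 2 + 8 * C * lam) - lam := (le_div_iff₀ hlam).mp hα
    have h3 : (α + 1) * lam ≤ Real.sqrt (lam ^ 2 + 8 * C * lam) := by linarith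
    have h4 : (0:ℝ) ≤ (α + 1) * lam := by positivity
    have h2 : ((α + 1) * lam) ^ 2 ≤ lam ^ 2 + 8 * C * lam := by
      calc ((α + 1) * lam) ^ 2 ≤ Real.sqrt (lam ^ 2 + 8 * C * lam) ^ 2 :=
            pow_le_pow_left₀ h4 h3 2
        _ = lam ^ 2 + 8 * C * lam := Real.sq_sqrt hX
    by_contra hcon
    push_neg at hcon
    have := mul_lt_mul_of_pos_right hcon hlam
    nlinarith [this, h2]
  have hv0 : v p ≤ 0 := Real.log_nonpos (hupos p hp).le (hule p hp)
  -- final assembly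
  have hS_nonneg : (0:ℝ) ≤ ∑ i, ∑ j, pd j (pd i v) p ^ 2 :=
    Finset.sum_nonneg fun i _ => Finset.sum_nonneg fun j _ => sq_nonneg _
  have hA1 : (0:ℝ) ≤ (∑ i, ∑ j, pd j (pd i v) p ^ 2)
      + (∑ i, pd i v p * pd i q p) + q p ^ 2 := by
    have := arith1 (∑ i, ∑ j, pd j (pd i v) p ^ 2)
      (∑ i, ∑ j, pd i v p * pd j v p * pd i (pd j v) p) (q p) hS_nonneg hCS
    rw [hW2]
    linarith
  simp only at hbp
  have hbp2 : 0 < α * u p * q p / 4 + C * v p - d := by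
    rw [hΦuq p hp] at hbp
    nlinarith [hbp]
  have hfin := arith2 lam C d α (u p) (q p) (v p) (α * u p * q p / 4 + C * v p - d)
    hlam hC hd2 hdpos h8 hα0 (hupos p hp) (hule p hp) (hq_nonneg p) hv0 hlingp rfl hbp2
  rw [hlapb, hinner, hΔv p hp, hΔF, hΦuq p hp]
  simp only
  rw [hΦuq p hp]
  nlinarith [hfin, hA1, mul_nonneg (mul_nonneg hα0.le (hupos p hp).le) hA1,
    mul_pos hα0 (hupos p hp)]
end

section
/- Let Ω ⊂ ℝⁿ be open, λ ∈ ℝ, and let u be smooth on Ω with u > 0 and Δu = −λu on Ω; set v = log u and w = √u. Let α, C, d ∈ ℝ and define b := α|∇w|² + C·v − d on Ω. Then at every point of Ω, Δb + 2⟨∇b, ∇v⟩ = 2α‖Hess w‖² + 4α·Hess w(∇w, ∇w)/w + 2α|∇w|⁴/w² − αλ|∇w|² + C|∇v|² − Cλ, where ‖Hess w‖² denotes the squared Hilbert–Schmidt (Frobenius) norm of the Hessian of w. -/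
open scoped RealInnerProductSpace

/-- The `i`-th partial derivative of `f`. -/
noncomputable def pd {n : ℕ} (i : Fin n) (f : EuclideanSpace ℝ (Fin n) → ℝ) :
    EuclideanSpace ℝ (Fin n) → ℝ :=
  fun y => fderiv ℝ f y (EuclideanSpace.single i 1)

section Aux

variable {n : ℕ} {f g a c : EuclideanSpace ℝ (Fin n) → ℝ}
  {x : EuclideanSpace ℝ (Fin n)} {i j : Fin n}

lemma contDiffAt_pd (hf : ContDiffAt ℝ (⊤ : ℕ∞) f x) : ContDiffAt ℝ (⊤ : ℕ∞) (pd i f) x := by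
  have h := hf.fderiv_right (by exact_mod_cast le_top : ((⊤ : ℕ∞) : WithTop ℕ∞) + 1 ≤ ((⊤ : ℕ∞) : WithTop ℕ∞))
  exact (ContinuousLinearMap.apply ℝ ℝ (EuclideanSpace.single i 1)).contDiff.comp_contDiffAt x h

lemma differentiableAt_pd (hf : ContDiffAt ℝ (⊤ : ℕ∞) f x) : DifferentiableAt ℝ (pd i f) x :=
  (contDiffAt_pd hf).differentiableAt (by simp)

lemma fderiv_pd (hf : ContDiffAt ℝ (⊤ : ℕ∞) f x) (X : EuclideanSpace ℝ (Fin n)) :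
    fderiv ℝ (pd i f) x X = fderiv ℝ (fderiv ℝ f) x X (EuclideanSpace.single i 1) := by
  have hd : DifferentiableAt ℝ (fderiv ℝ f) x :=
    (hf.fderiv_right (by exact_mod_cast le_top : ((⊤ : ℕ∞) : WithTop ℕ∞) + 1 ≤ ((⊤ : ℕ∞) : WithTop ℕ∞))).differentiableAt (by simp)
  have h : pd i f = fun y => (fderiv ℝ f y) (EuclideanSpace.single i 1) := rfl
  rw [h, fderiv_clm_apply hd (differentiableAt_const _)]
  simp

lemma pd_pd_eq_hess (hf : ContDiffAt ℝ (⊤ : ℕ∞) f x) :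
    pd j (pd i f) x = hess f x (EuclideanSpace.single j 1) (EuclideanSpace.single i 1) :=
  fderiv_pd hf _

lemma pd_comm (hf : ContDiffAt ℝ (⊤ : ℕ∞) f x) : pd j (pd i f) x = pd i (pd j f) x := by
  rw [pd_pd_eq_hess hf, pd_pd_eq_hess hf]
  exact (hf.isSymmSndFDerivAt (by rw [minSmoothness_of_isRCLikeNormedField]; exact WithTop.coe_le_coe.2 le_top)) _ _

lemma lap_eq_sum (hf : ContDiffAt ℝ (⊤ : ℕ∞) f x) : lap f x = ∑ i, pd i (pd i f) x := by
  unfold lap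
  exact Finset.sum_congr rfl fun i _ => (pd_pd_eq_hess hf).symm

lemma grad_apply : gradient f x i = pd i f x := by
  have h1 : ⟪gradient f x, EuclideanSpace.single i (1:ℝ)⟫
      = fderiv ℝ f x (EuclideanSpace.single i 1) := InnerProductSpace.toDual_symm_apply
  simp only [EuclideanSpace.inner_single_right] at h1
  simpa [pd] using h1

lemma inner_grad_grad : ⟪gradient f x, gradient g x⟫ = ∑ i, pd i f x * pd i g x := by
  rw [PiLp.inner_apply]
  exact Finset.sum_congr rfl fun i _ => by rw [grad_apply, grad_apply]; simp [RCLike.inner_apply]; ring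

lemma norm_grad_sq : ‖gradient f x‖ ^ 2 = ∑ i, (pd i f x) ^ 2 := by
  rw [← real_inner_self_eq_norm_sq, inner_grad_grad]
  exact Finset.sum_congr rfl fun i _ => (sq _).symm

lemma euclid_decomp (X : EuclideanSpace ℝ (Fin n)) :
    ∑ i, X i • EuclideanSpace.single i (1:ℝ) = X := by
  have h := (EuclideanSpace.basisFun (Fin n) ℝ).toBasis.sum_repr X
  simpa [EuclideanSpace.basisFun_apply, EuclideanSpace.basisFun_repr] using h

lemma hess_expand (X Y : EuclideanSpace ℝ (Fin n)) :
    hess f x X Y = ∑ i, ∑ j, X i * Y j *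
      hess f x (EuclideanSpace.single i 1) (EuclideanSpace.single j 1) := by
  unfold hess
  conv_lhs => rw [← euclid_decomp X, ← euclid_decomp Y]
  simp only [map_sum, map_smul, ContinuousLinearMap.sum_apply,
    ContinuousLinearMap.smul_apply, smul_eq_mul, Finset.mul_sum]
  rw [Finset.sum_comm]
  exact Finset.sum_congr rfl fun i _ => Finset.sum_congr rfl fun j _ => by ring

lemma pd_congr_nhds (h : f =ᶠ[nhds x] g) : pd i f x = pd i g x := by
  unfold pd; rw [h.fderiv_eq]

lemma pd_mul (ha : DifferentiableAt ℝ a x) (hc : DifferentiableAt ℝ c x) :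
    pd i (fun y => a y * c y) x = a x * pd i c x + c x * pd i a x := by
  unfold pd; rw [fderiv_fun_mul ha hc]; simp

lemma pd_const_mul (ha : DifferentiableAt ℝ a x) (r : ℝ) :
    pd i (fun y => r * a y) x = r * pd i a x := by
  unfold pd; rw [fderiv_const_mul ha r]; simp

lemma pd_add (ha : DifferentiableAt ℝ a x) (hc : DifferentiableAt ℝ c x) :
    pd i (fun y => a y + c y) x = pd i a x + pd i c x := by
  unfold pd; rw [fderiv_fun_add ha hc]; simp

lemma pd_sub (ha : DifferentiableAt ℝ a x) (hc : DifferentiableAt ℝ c x) :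
    pd i (fun y => a y - c y) x = pd i a x - pd i c x := by
  unfold pd; rw [fderiv_fun_sub ha hc]; simp

lemma pd_sub_const (ha : DifferentiableAt ℝ a x) (r : ℝ) :
    pd i (fun y => a y - r) x = pd i a x := by
  unfold pd; rw [fderiv_fun_sub ha (differentiableAt_const r)]; simp

lemma pd_sum {ι : Type*} (s : Finset ι) (A : ι → EuclideanSpace ℝ (Fin n) → ℝ)
    (h : ∀ k ∈ s, DifferentiableAt ℝ (A k) x) :
    pd i (fun y => ∑ k ∈ s, A k y) x = ∑ k ∈ s, pd i (A k) x := by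
  unfold pd; rw [fderiv_fun_sum h]; simp

lemma pd_inv (ha : DifferentiableAt ℝ a x) (h0 : a x ≠ 0) :
    pd i (fun y => (a y)⁻¹) x = -(a x ^ 2)⁻¹ * pd i a x := by
  have h := ((hasDerivAt_inv h0).comp_hasFDerivAt x ha.hasFDerivAt).fderiv
  have he : (fun y => (a y)⁻¹) = (fun y => y⁻¹) ∘ a := rfl
  unfold pd
  rw [he, h]
  simp [mul_comm]

lemma pd_sq (ha : DifferentiableAt ℝ a x) :
    pd i (fun y => a y ^ 2) x = 2 * a x * pd i a x := by
  have h : (fun y => a y ^ 2) = fun y => a y * a y := by funext y; ring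
  rw [h, pd_mul ha ha]; ring

end Aux

/-- Equation (3.8) of the paper (flat case, `Ric ≡ 0`): the combination of the Bochner
formula with the gradient inner-product computation, for the barrier
`b = α|∇w|² + C·v − d` with `w = √u` and `v = log u`. Here `‖Hess w‖²` is the squared
Hilbert–Schmidt (Frobenius) norm of the Hessian of `w`. -/
theorem bochner_gradient_identity {n : ℕ} (hn : 0 < n)
    (Ω : Set (EuclideanSpace ℝ (Fin n))) (hΩo : IsOpen Ω) (lam : ℝ)
    (u : EuclideanSpace ℝ (Fin n) → ℝ) (hu : ContDiffOn ℝ (⊤ : ℕ∞) u Ω)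
    (hupos : ∀ x ∈ Ω, 0 < u x) (heig : ∀ x ∈ Ω, lap u x = -lam * u x)
    (α C d : ℝ)
    (v w b : EuclideanSpace ℝ (Fin n) → ℝ)
    (hv : v = fun y => Real.log (u y)) (hw : w = fun y => Real.sqrt (u y))
    (hb : b = fun x => α * ‖gradient w x‖ ^ 2 + C * v x - d) :
    ∀ x ∈ Ω,
      lap b x + 2 * ⟪gradient b x, gradient v x⟫
        = 2 * α * (∑ i : Fin n, ∑ j : Fin n,
              (hess w x (EuclideanSpace.single i 1) (EuclideanSpace.single j 1)) ^ 2)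
          + 4 * α * hess w x (gradient w x) (gradient w x) / w x
          + 2 * α * ‖gradient w x‖ ^ 4 / w x ^ 2
          - α * lam * ‖gradient w x‖ ^ 2
          + C * ‖gradient v x‖ ^ 2 - C * lam := by
  intro x hx
  have hnhds : ∀ y ∈ Ω, Ω ∈ nhds y := fun y hy => hΩo.mem_nhds hy
  have hU : ∀ y ∈ Ω, ContDiffAt ℝ (⊤ : ℕ∞) u y := fun y hy => hu.contDiffAt (hnhds y hy)
  have hune : ∀ y ∈ Ω, u y ≠ 0 := fun y hy => (hupos y hy).ne'
  have hW : ∀ y ∈ Ω, ContDiffAt ℝ (⊤ : ℕ∞) w y := fun y hy => by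
    rw [hw]; exact (hU y hy).sqrt (hune y hy)
  have hV : ∀ y ∈ Ω, ContDiffAt ℝ (⊤ : ℕ∞) v y := fun y hy => by
    rw [hv]; exact (hU y hy).log (hune y hy)
  have hwpos : ∀ y ∈ Ω, 0 < w y := fun y hy => by
    rw [hw]; exact Real.sqrt_pos.2 (hupos y hy)
  have hwne : ∀ y ∈ Ω, w y ≠ 0 := fun y hy => (hwpos y hy).ne'
  have husq : ∀ y ∈ Ω, u y = w y ^ 2 := fun y hy => by
    rw [hw]; exact (Real.sq_sqrt (hupos y hy).le).symm
  -- first derivatives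
  have hdu : ∀ y ∈ Ω, ∀ i, pd i u y = 2 * w y * pd i w y := by
    intro y hy i
    have hfd : HasFDerivAt w ((1 / (2 * Real.sqrt (u y))) • fderiv ℝ u y) y := by
      rw [hw]
      exact (Real.hasDerivAt_sqrt (hune y hy)).comp_hasFDerivAt y
        ((hU y hy).differentiableAt (by simp)).hasFDerivAt
    have h2 : pd i w y = 1 / (2 * w y) * pd i u y := by
      show fderiv ℝ w y (EuclideanSpace.single i 1) = _
      rw [hfd.fderiv]
      simp [hw, pd]
    rw [h2]
    field_simp [hwne y hy]
  have hdv : ∀ y ∈ Ω, ∀ i, pd i v y = pd i u y * (u y)⁻¹ := by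
    intro y hy i
    have hfd : HasFDerivAt v ((u y)⁻¹ • fderiv ℝ u y) y := by
      rw [hv]
      exact (Real.hasDerivAt_log (hune y hy)).comp_hasFDerivAt y
        ((hU y hy).differentiableAt (by simp)).hasFDerivAt
    show fderiv ℝ v y (EuclideanSpace.single i 1) = _
    rw [hfd.fderiv]
    simp [pd, mul_comm]
  have hdvw : ∀ y ∈ Ω, ∀ i, pd i v y = 2 * pd i w y * (w y)⁻¹ := by
    intro y hy i
    rw [hdv y hy i, hdu y hy i, husq y hy]
    field_simp [hwne y hy]
  -- the squared gradient of w
  set G : EuclideanSpace ℝ (Fin n) → ℝ := fun y => ∑ k, (pd k w y) ^ 2 with hGdef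
  have hGc : ∀ y ∈ Ω, ContDiffAt ℝ (⊤ : ℕ∞) G y := fun y hy =>
    ContDiffAt.sum fun k _ => (contDiffAt_pd (hW y hy)).pow 2
  have hGd : ∀ y ∈ Ω, DifferentiableAt ℝ G y := fun y hy =>
    (hGc y hy).differentiableAt (by simp)
  have hpdG : ∀ y ∈ Ω, ∀ j, pd j G y = ∑ k, 2 * pd k w y * pd j (pd k w) y := by
    intro y hy j
    rw [hGdef]
    rw [pd_sum Finset.univ (fun k => fun y => pd k w y ^ 2)
      (fun k _ => (differentiableAt_pd (hW y hy)).pow 2)]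
    exact Finset.sum_congr rfl fun k _ => pd_sq (differentiableAt_pd (hW y hy))
  -- the Laplacian of w on Ω
  have hlapw : ∀ y ∈ Ω, (∑ j, pd j (pd j w) y) = -(lam/2) * w y - G y * (w y)⁻¹ := by
    intro y hy
    have h1 : ∀ j : Fin n, pd j (pd j u) y
        = 2 * w y * pd j (pd j w) y + 2 * (pd j w y) ^ 2 := by
      intro j
      have hfe : pd j u =ᶠ[nhds y] fun z => 2 * w z * pd j w z :=
        Filter.eventually_of_mem (hnhds y hy) (fun z hz => hdu z hz j)
      rw [pd_congr_nhds hfe]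
      rw [pd_mul (((hW y hy).differentiableAt (by simp)).const_mul 2)
        (differentiableAt_pd (hW y hy)),
        pd_const_mul ((hW y hy).differentiableAt (by simp)) 2]
      ring
    have h4 : ∑ j, pd j (pd j u) y = 2 * w y * (∑ j, pd j (pd j w) y) + 2 * G y := by
      rw [Finset.sum_congr rfl fun j _ => h1 j, Finset.sum_add_distrib, hGdef]
      rw [Finset.mul_sum, Finset.mul_sum]
    have h5 : -lam * u y = 2 * w y * (∑ j, pd j (pd j w) y) + 2 * G y := by
      rw [← heig y hy, lap_eq_sum (hU y hy), h4]
    rw [husq y hy] at h5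
    have hwny := hwne y hy
    field_simp
    linarith [h5]
  have hWx := hW x hx
  -- third-derivative commutation
  have hT : ∀ k : Fin n, ∑ j, pd j (pd j (pd k w)) x
      = pd k (fun y => ∑ j, pd j (pd j w) y) x := by
    intro k
    have hstep : ∀ j : Fin n, pd j (pd j (pd k w)) x = pd k (pd j (pd j w)) x := by
      intro j
      have hfe : pd j (pd k w) =ᶠ[nhds x] pd k (pd j w) :=
        Filter.eventually_of_mem (hnhds x hx) (fun z hz => pd_comm (hW z hz))
      rw [pd_congr_nhds hfe]
      exact pd_comm (contDiffAt_pd hWx)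
    rw [Finset.sum_congr rfl fun j _ => hstep j]
    exact (pd_sum Finset.univ (fun j => pd j (pd j w))
      (fun j _ => differentiableAt_pd (contDiffAt_pd hWx))).symm
  -- derivative of the Laplacian of w
  have hTv : ∀ k : Fin n, pd k (fun y => ∑ j, pd j (pd j w) y) x
      = -(lam/2) * pd k w x
        - (G x * (-(w x ^ 2)⁻¹ * pd k w x) + (w x)⁻¹ * pd k G x) := by
    intro k
    have hfe : (fun y => ∑ j, pd j (pd j w) y)
        =ᶠ[nhds x] fun y => -(lam/2) * w y - G y * (w y)⁻¹ :=
      Filter.eventually_of_mem (hnhds x hx) (fun z hz => hlapw z hz)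
    rw [pd_congr_nhds hfe]
    have hwd : DifferentiableAt ℝ w x := hWx.differentiableAt (by simp)
    have hinv : DifferentiableAt ℝ (fun y => (w y)⁻¹) x := hwd.inv (hwne x hx)
    have hGd' := hGd x hx
    rw [pd_sub (a := fun y => -(lam/2) * w y) (c := fun y => G y * (w y)⁻¹) (hwd.const_mul _) (hGd'.mul hinv), pd_const_mul hwd,
      pd_mul hGd' hinv, pd_inv hwd (hwne x hx)]
  -- Bochner: the Laplacian of G at x
  have hGA : ∑ j, pd j (pd j G) x
      = 2 * (∑ j, ∑ k, (pd j (pd k w) x) ^ 2)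
        + ∑ k, 2 * pd k w x * (∑ j, pd j (pd j (pd k w)) x) := by
    have hterm : ∀ j : Fin n, pd j (pd j G) x
        = ∑ k, (2 * pd k w x * pd j (pd j (pd k w)) x + 2 * (pd j (pd k w) x) ^ 2) := by
      intro j
      have hfe : pd j G =ᶠ[nhds x] fun y => ∑ k, 2 * pd k w y * pd j (pd k w) y :=
        Filter.eventually_of_mem (hnhds x hx) (fun z hz => hpdG z hz j)
      rw [pd_congr_nhds hfe]
      rw [pd_sum Finset.univ (fun k => fun y => 2 * pd k w y * pd j (pd k w) y)
        (fun k _ => ((differentiableAt_pd hWx).const_mul 2).mul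
          (differentiableAt_pd (contDiffAt_pd hWx)))]
      refine Finset.sum_congr rfl fun k _ => ?_
      rw [pd_mul ((differentiableAt_pd hWx).const_mul 2)
        (differentiableAt_pd (contDiffAt_pd hWx)),
        pd_const_mul (differentiableAt_pd hWx) 2]
      ring
    rw [Finset.sum_congr rfl fun j _ => hterm j]
    simp only [Finset.sum_add_distrib]
    rw [add_comm]
    congr 1
    · rw [Finset.mul_sum]
      exact Finset.sum_congr rfl fun j _ => by rw [Finset.mul_sum]
    · rw [Finset.sum_comm]
      exact Finset.sum_congr rfl fun k _ => (Finset.mul_sum _ _ _).symm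
  have hGx : G x = ∑ k, (pd k w x) ^ 2 := by simp only [hGdef]
  -- the third-derivative sum, in closed form
  have hsum3 : ∑ k, 2 * pd k w x * (∑ j, pd j (pd j (pd k w)) x)
      = -lam * G x + 2 * G x ^ 2 * ((w x) ^ 2)⁻¹
        - 4 * (∑ k, ∑ m, pd k w x * pd m w x * pd k (pd m w) x) * (w x)⁻¹ := by
    have hin : ∀ k : Fin n, pd k w x * (∑ m, 2 * pd m w x * pd k (pd m w) x)
        = ∑ m, 2 * (pd k w x * pd m w x * pd k (pd m w) x) := by
      intro k
      rw [Finset.mul_sum]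
      exact Finset.sum_congr rfl fun m _ => by ring
    have h1 : ∀ k : Fin n, 2 * pd k w x * (∑ j, pd j (pd j (pd k w)) x)
        = (-lam) * (pd k w x) ^ 2 + (2 * G x * ((w x) ^ 2)⁻¹) * (pd k w x) ^ 2
          - (2 * (w x)⁻¹) * (∑ m, 2 * (pd k w x * pd m w x * pd k (pd m w) x)) := by
      intro k
      rw [hT k, hTv k, hpdG x hx k, ← hin k]
      ring
    rw [Finset.sum_congr rfl fun k _ => h1 k]
    rw [Finset.sum_sub_distrib, Finset.sum_add_distrib, ← Finset.mul_sum,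
      ← Finset.mul_sum, ← Finset.mul_sum]
    have h2 : ∑ k, ∑ m, 2 * (pd k w x * pd m w x * pd k (pd m w) x)
        = 2 * ∑ k, ∑ m, pd k w x * pd m w x * pd k (pd m w) x := by
      rw [Finset.mul_sum]
      exact Finset.sum_congr rfl fun k _ => (Finset.mul_sum _ _ _).symm
    rw [h2, ← hGx]
    ring
  -- Laplacian of v at x
  have hlapv : ∑ i, pd i (pd i v) x = -lam - ∑ i, (pd i v x) ^ 2 := by
    have h1 : ∀ i : Fin n, pd i (pd i v) x
        = -((u x) ^ 2)⁻¹ * (pd i u x) ^ 2 + (u x)⁻¹ * pd i (pd i u) x := by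
      intro i
      have hfe : pd i v =ᶠ[nhds x] fun z => pd i u z * (u z)⁻¹ :=
        Filter.eventually_of_mem (hnhds x hx) (fun z hz => hdv z hz i)
      rw [pd_congr_nhds hfe]
      have hud : DifferentiableAt ℝ u x := (hU x hx).differentiableAt (by simp)
      rw [pd_mul (c := fun y => (u y)⁻¹) (differentiableAt_pd (hU x hx)) (hud.inv (hune x hx)),
        pd_inv hud (hune x hx)]
      ring
    have h2 : ∑ i, (pd i v x) ^ 2 = ((u x) ^ 2)⁻¹ * ∑ i, (pd i u x) ^ 2 := by
      rw [Finset.mul_sum]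
      exact Finset.sum_congr rfl fun i _ => by rw [hdv x hx i, mul_pow, inv_pow]; ring
    rw [Finset.sum_congr rfl fun i _ => h1 i, Finset.sum_add_distrib,
      ← Finset.mul_sum, ← Finset.mul_sum, ← lap_eq_sum (hU x hx), heig x hx, h2]
    field_simp [hune x hx]
    ring
  -- the function b
  have hbG : b = fun y => α * G y + C * v y - d := by
    funext y
    simp only [hb, hGdef]
    rw [norm_grad_sq]
  have hbC : ContDiffAt ℝ (⊤ : ℕ∞) b x := by
    rw [hbG]
    exact ((contDiffAt_const.mul (hGc x hx)).add (contDiffAt_const.mul (hV x hx))).sub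
      contDiffAt_const
  have hpdb : ∀ y ∈ Ω, ∀ i, pd i b y = α * pd i G y + C * pd i v y := by
    intro y hy i
    have hvd : DifferentiableAt ℝ v y := (hV y hy).differentiableAt (by simp)
    rw [hbG, pd_sub_const (a := fun y => α * G y + C * v y) (((hGd y hy).const_mul α).add (hvd.const_mul C)) d,
      pd_add ((hGd y hy).const_mul α) (hvd.const_mul C),
      pd_const_mul (hGd y hy) α, pd_const_mul hvd C]
  have hlapb : lap b x = α * (∑ j, pd j (pd j G) x) + C * (∑ i, pd i (pd i v) x) := by
    rw [lap_eq_sum hbC]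
    have hterm : ∀ j : Fin n, pd j (pd j b) x
        = α * pd j (pd j G) x + C * pd j (pd j v) x := by
      intro j
      have hfe : pd j b =ᶠ[nhds x] fun y => α * pd j G y + C * pd j v y :=
        Filter.eventually_of_mem (hnhds x hx) (fun z hz => hpdb z hz j)
      rw [pd_congr_nhds hfe,
        pd_add ((differentiableAt_pd (hGc x hx)).const_mul α)
          ((differentiableAt_pd (hV x hx)).const_mul C),
        pd_const_mul (differentiableAt_pd (hGc x hx)) α,
        pd_const_mul (differentiableAt_pd (hV x hx)) C]
    rw [Finset.sum_congr rfl fun j _ => hterm j, Finset.sum_add_distrib,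
      ← Finset.mul_sum, ← Finset.mul_sum]
  -- the inner-product term
  have hinner : ⟪gradient b x, gradient v x⟫
      = α * (∑ i, pd i G x * pd i v x) + C * ∑ i, (pd i v x) ^ 2 := by
    rw [inner_grad_grad, Finset.mul_sum, Finset.mul_sum, ← Finset.sum_add_distrib]
    refine Finset.sum_congr rfl fun i _ => ?_
    rw [hpdb x hx i]
    ring
  have hGV : ∑ i, pd i G x * pd i v x
      = 4 * (∑ i, ∑ k, pd i w x * pd k w x * pd i (pd k w) x) * (w x)⁻¹ := by
    have h1 : ∀ i : Fin n, pd i G x * pd i v x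
        = ∑ k, 4 * (pd i w x * pd k w x * pd i (pd k w) x) * (w x)⁻¹ := by
      intro i
      rw [hpdG x hx i, hdvw x hx i, Finset.sum_mul]
      exact Finset.sum_congr rfl fun k _ => by ring
    rw [Finset.sum_congr rfl fun i _ => h1 i]
    rw [Finset.mul_sum, Finset.sum_mul]
    refine Finset.sum_congr rfl fun i _ => ?_
    rw [Finset.mul_sum, Finset.sum_mul]
  -- rewrite the statement's right-hand side quantities
  have hSstat : ∑ i : Fin n, ∑ j : Fin n,
      (hess w x (EuclideanSpace.single i 1) (EuclideanSpace.single j 1)) ^ 2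
      = ∑ j : Fin n, ∑ k : Fin n, (pd j (pd k w) x) ^ 2 :=
    Finset.sum_congr rfl fun i _ => Finset.sum_congr rfl fun j _ => by
      rw [← pd_pd_eq_hess hWx]
  have hHstat : hess w x (gradient w x) (gradient w x)
      = ∑ i, ∑ j, pd i w x * pd j w x * pd i (pd j w) x := by
    rw [hess_expand]
    exact Finset.sum_congr rfl fun i _ => Finset.sum_congr rfl fun j _ => by
      rw [grad_apply, grad_apply, ← pd_pd_eq_hess hWx]
  have hnw : ‖gradient w x‖ ^ 2 = G x := by rw [norm_grad_sq, hGx]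
  have hnw4 : ‖gradient w x‖ ^ 4 = G x ^ 2 := by
    rw [show (4 : ℕ) = 2 * 2 from rfl, pow_mul, hnw]
  have hnv : ‖gradient v x‖ ^ 2 = ∑ i, (pd i v x) ^ 2 := norm_grad_sq
  -- final assembly
  rw [hlapb, hGA, hsum3, hinner, hGV, hlapv, hSstat, hHstat, hnw, hnw4, hnv]
  field_simp [hwne x hx]
  ring
end
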